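/- Let (Ω, 𝔽, ℙ) be a probability space, H a separable complex Hilbert space, and (Ψ_k)_{k∈ℕ} an i.i.d. sequence of strongly measurable random operators on H taking values in positive contractions, satisfying the coercivity condition 𝔼‖Ψ_k x‖² ≥ C‖x‖² for all x ∈ H with a constant 0 < C < 1. Then for every x ∈ H, almost surely x = lim_{n→∞} Σ_{k=1}^{n} Ψ_k (I − Ψ_{k−1})⋯(I − Ψ₁) x, i.e. the operator identity I = Σ_{k=1}^{∞} Ψ_k (I − Ψ_{k−1})⋯(I − Ψ₁) holds almost surely in the strong sense. -/

import Mathlib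

/-!
Write `R_n x = (I - Ψ_n)⋯(I - Ψ₁) x`; the partial sums telescope to `x - R_n x`. For a positive
contraction `T` one has `‖T y‖² + ‖(I - T) y‖² ≤ ‖y‖²`, so coercivity gives
`𝔼‖(I - Ψ_k) y‖² ≤ (1 - C)‖y‖²` for every fixed `y`. As `R_n x` is a function of `Ψ₁, …, Ψ_n`,
which are independent of `Ψ_{n+1}`, Fubini yields `𝔼‖R_{n+1} x‖² ≤ (1 - C) 𝔼‖R_n x‖²`. Hence
`𝔼‖R_n x‖² ≤ (1 - C)ⁿ ‖x‖²` is summable, and so `R_n x → 0` almost surely.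
-/

open MeasureTheory ProbabilityTheory Filter

/-- The σ-algebra on `B(H)` generated by the point evaluations `T ↦ T x`, i.e. the σ-algebra
corresponding to measurability in the strong operator sense. -/
noncomputable def strongMS (H : Type*) [NormedAddCommGroup H] [InnerProductSpace ℂ H] :
    MeasurableSpace (H →L[ℂ] H) :=
  ⨆ x : H, (borel H).comap fun T => T x

/-- The residual products `R₀ = I`, `R_n(ω) = (I - Ψ_n(ω))⋯(I - Ψ₁(ω))`.
Random operators are indexed starting from `1`, i.e. `Ψ 1, Ψ 2, …`. -/
noncomputable def residualProd {Ω H : Type*} [NormedAddCommGroup H] [InnerProductSpace ℂ H]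
    (Ψ : ℕ → Ω → (H →L[ℂ] H)) (ω : Ω) : ℕ → (H →L[ℂ] H)
  | 0 => 1
  | n + 1 => (1 - Ψ (n + 1) ω) * residualProd Ψ ω n

open scoped ENNReal Topology

lemma norm_apply_sq_add_norm_one_sub_apply_sq_le {H : Type*} [NormedAddCommGroup H]
    [InnerProductSpace ℂ H] [CompleteSpace H] {T : H →L[ℂ] H} (h0 : 0 ≤ T) (h1 : T ≤ 1) (y : H) :
    ‖T y‖ ^ 2 + ‖(1 - T) y‖ ^ 2 ≤ ‖y‖ ^ 2 := by
  have hT : T.IsPositive := (ContinuousLinearMap.nonneg_iff_isPositive T).1 h0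
  have hsq : (T - T ^ 2).IsPositive := CStarAlgebra.pow_antitone h0 h1 (by norm_num : 1 ≤ 2)
  -- `‖T y‖² = ⟪T² y, y⟫ ≤ ⟪T y, y⟫`
  have hinner : ‖T y‖ ^ 2 ≤ RCLike.re (inner ℂ (T y) y) := by
    have := hsq.re_inner_nonneg_left y
    rw [sub_apply, pow_two, mul_apply_eq_comp, inner_sub_left, map_sub,
      hT.inner_left_eq_inner_right (T y) y, inner_self_eq_norm_sq] at this
    linarith
  have hexp : ‖(1 - T) y‖ ^ 2 = ‖y‖ ^ 2 - 2 * RCLike.re (inner ℂ (T y) y) + ‖T y‖ ^ 2 := by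
    rw [sub_apply, one_apply_eq_self, @norm_sub_sq ℂ, inner_re_symm]
  linarith

section StrongMeasurability

variable {H : Type*} [NormedAddCommGroup H] [InnerProductSpace ℂ H]
  [MeasurableSpace H] [BorelSpace H]

lemma measurable_strongMS_iff {α : Type*} {m : MeasurableSpace α} {A : α → H →L[ℂ] H} :
    Measurable[m, strongMS H] A ↔ ∀ y, Measurable[m] fun a => A a y := by
  simp only [measurable_iff_comap_le, strongMS, MeasurableSpace.comap_iSup, iSup_le_iff,
    MeasurableSpace.comap_comp, BorelSpace.measurable_eq (α := H)]
  rfl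

variable [TopologicalSpace.SeparableSpace H]

lemma measurable_apply_strongMS :
    Measurable[MeasurableSpace.prod ‹_› (strongMS H)] fun p : H × (H →L[ℂ] H) => p.2 p.1 :=
  measurable_uncurry_of_continuous_of_measurable (m := strongMS H)
    (u := fun y (T : H →L[ℂ] H) => T y) (fun T => T.continuous)
    (fun y => measurable_strongMS_iff.1 measurable_id y)

lemma measurable_one_sub_apply_strongMS :
    Measurable[MeasurableSpace.prod ‹_› (strongMS H)]
      fun p : H × (H →L[ℂ] H) => (1 - p.2) p.1 := by
  have h : Measurable[MeasurableSpace.prod ‹_› (strongMS H)]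
      fun p : H × (H →L[ℂ] H) => p.1 - p.2 p.1 :=
    measurable_fst.sub measurable_apply_strongMS
  simpa only [sub_apply, one_apply_eq_self] using h

end StrongMeasurability

namespace ProbabilityTheory

variable {Ω : Type*} {mΩ : MeasurableSpace Ω} {μ : Measure Ω}

lemma IndepFun.lintegral_comp_eq_lintegral_lintegral [IsFiniteMeasure μ] {α β : Type*}
    {mα : MeasurableSpace α} {mβ : MeasurableSpace β} {X : Ω → α} {Z : Ω → β}
    (hXZ : IndepFun X Z μ) (hX : Measurable X) (hZ : Measurable Z) {f : α → β → ℝ≥0∞}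
    (hf : Measurable (Function.uncurry f)) :
    ∫⁻ ω, f (X ω) (Z ω) ∂μ = ∫⁻ ω, ∫⁻ ω', f (X ω) (Z ω') ∂μ ∂μ := by
  calc ∫⁻ ω, f (X ω) (Z ω) ∂μ = ∫⁻ p, Function.uncurry f p ∂(μ.map fun ω => (X ω, Z ω)) :=
        (lintegral_map hf (hX.prodMk hZ)).symm
    _ = ∫⁻ a, ∫⁻ b, f a b ∂(μ.map Z) ∂(μ.map X) := by
        rw [hXZ.map_prod_eq_prod_map_map hX.aemeasurable hZ.aemeasurable,
          lintegral_prod _ hf.aemeasurable]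
        rfl
    _ = ∫⁻ a, ∫⁻ ω', f a (Z ω') ∂μ ∂(μ.map X) := by
        congr! 2 with a
        exact lintegral_map (hf.comp measurable_prodMk_left) hZ
    _ = ∫⁻ ω, ∫⁻ ω', f (X ω) (Z ω') ∂μ ∂μ :=
        lintegral_map
          (hf.comp (measurable_fst.prodMk (hZ.comp measurable_snd))).lintegral_prod_right' hX

lemma iIndepFun.indepFun_of_measurable_biSup {ι γ : Type*} {β : ι → Type*}
    {m : ∀ i, MeasurableSpace (β i)} [MeasurableSpace γ] {f : ∀ i, Ω → β i}
    (hf : iIndepFun f μ) (hf_meas : ∀ i, Measurable (f i)) {S : Set ι} {j : ι} (hj : j ∉ S)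
    {Y : Ω → γ} (hY : Measurable[⨆ i ∈ S, (m i).comap (f i)] Y) : IndepFun Y (f j) μ := by
  have h := indep_iSup_of_disjoint (fun i => (hf_meas i).comap_le)
    ((iIndepFun_iff_iIndep _ _ _).1 hf) (Set.disjoint_singleton_right.2 hj)
  simp only [Set.mem_singleton_iff, iSup_iSup_eq_left] at h
  exact (IndepFun_iff_Indep _ _ _).2 (indep_of_indep_of_le_left h hY.comap_le)

end ProbabilityTheory

lemma MeasureTheory.ae_tendsto_zero_of_tsum_lintegral_ne_top {Ω : Type*} {mΩ : MeasurableSpace Ω}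
    {μ : Measure Ω} {f : ℕ → Ω → ℝ≥0∞} (hf : ∀ n, AEMeasurable (f n) μ)
    (h : ∑' n, ∫⁻ ω, f n ω ∂μ ≠ ∞) : ∀ᵐ ω ∂μ, Tendsto (fun n => f n ω) atTop (𝓝 0) := by
  rw [← lintegral_tsum hf] at h
  filter_upwards [ae_lt_top' (AEMeasurable.tsum hf) h] with ω hω
  exact ENNReal.tendsto_atTop_zero_of_tsum_ne_top hω.ne

section ResidualProd

variable {Ω : Type*} {mΩ : MeasurableSpace Ω} {μ : Measure Ω}
  {H : Type*} [NormedAddCommGroup H] [InnerProductSpace ℂ H]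

lemma sum_Icc_mul_residualProd (Ψ : ℕ → Ω → (H →L[ℂ] H)) (ω : Ω) (n : ℕ) :
    ∑ k ∈ Finset.Icc 1 n, Ψ k ω * residualProd Ψ ω (k - 1) = 1 - residualProd Ψ ω n := by
  induction n with
  | zero => simp [residualProd]
  | succ n ih =>
    rw [Finset.sum_Icc_succ_top (Nat.le_add_left 1 n), ih, Nat.add_sub_cancel, residualProd]
    noncomm_ring

variable [MeasurableSpace H] [BorelSpace H]

lemma lintegral_enorm_one_sub_apply_sq_le [CompleteSpace H] [IsProbabilityMeasure μ]
    {A : Ω → H →L[ℂ] H} (hA : ∀ y, Measurable fun ω => A ω y) (h0 : ∀ ω, 0 ≤ A ω) (h1 : ∀ ω, A ω ≤ 1) {C : ℝ}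
    (hcoer : ∀ y, C * ‖y‖ ^ 2 ≤ ∫ ω, ‖A ω y‖ ^ 2 ∂μ) (y : H) :
    ∫⁻ ω, ‖(1 - A ω) y‖ₑ ^ 2 ∂μ ≤ ENNReal.ofReal (1 - C) * ‖y‖ₑ ^ 2 := by
  have hbound := fun ω => norm_apply_sq_add_norm_one_sub_apply_sq_le (h0 ω) (h1 ω) y
  have hnonneg : ∀ ω, 0 ≤ ‖y‖ ^ 2 - ‖A ω y‖ ^ 2 := fun ω => by
    linarith [hbound ω, sq_nonneg ‖(1 - A ω) y‖]
  have hint : Integrable (fun ω => ‖A ω y‖ ^ 2) μ :=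
    .of_bound ((hA y).norm.pow_const 2).aestronglyMeasurable (‖y‖ ^ 2) (ae_of_all _ fun ω => by
      rw [Real.norm_of_nonneg (sq_nonneg _)]
      linarith [hnonneg ω])
  calc ∫⁻ ω, ‖(1 - A ω) y‖ₑ ^ 2 ∂μ
      ≤ ∫⁻ ω, ENNReal.ofReal (‖y‖ ^ 2 - ‖A ω y‖ ^ 2) ∂μ := lintegral_mono fun ω => by
        rw [← ofReal_norm, ← ENNReal.ofReal_pow (norm_nonneg _)]
        exact ENNReal.ofReal_le_ofReal (by linarith [hbound ω])
    _ = ENNReal.ofReal (∫ ω, (‖y‖ ^ 2 - ‖A ω y‖ ^ 2) ∂μ) :=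
        (ofReal_integral_eq_lintegral_ofReal ((integrable_const _).sub hint)
          (ae_of_all _ hnonneg)).symm
    _ = ENNReal.ofReal (‖y‖ ^ 2 - ∫ ω, ‖A ω y‖ ^ 2 ∂μ) := by
        rw [integral_sub (integrable_const _) hint, integral_const, probReal_univ, one_smul]
    _ ≤ ENNReal.ofReal ((1 - C) * ‖y‖ ^ 2) := ENNReal.ofReal_le_ofReal (by linarith [hcoer y])
    _ = ENNReal.ofReal (1 - C) * ‖y‖ₑ ^ 2 := by
        rw [ENNReal.ofReal_mul' (sq_nonneg _), ENNReal.ofReal_pow (norm_nonneg _),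
          ofReal_norm]

variable [TopologicalSpace.SeparableSpace H]

lemma measurable_residualProd_apply_biSup (Ψ : ℕ → Ω → (H →L[ℂ] H)) (x : H) (n : ℕ) :
    Measurable[⨆ k ∈ Set.Iic n, (strongMS H).comap (Ψ k)] fun ω => residualProd Ψ ω n x := by
  induction n with
  | zero => exact measurable_const
  | succ n ih =>
    have hR : Measurable[⨆ k ∈ Set.Iic (n + 1), (strongMS H).comap (Ψ k)]
        fun ω => residualProd Ψ ω n x :=
      ih.mono (biSup_mono fun k hk => Set.Iic_subset_Iic.2 n.le_succ hk) le_rfl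
    have hΨ : Measurable[⨆ k ∈ Set.Iic (n + 1), (strongMS H).comap (Ψ k), strongMS H]
        (Ψ (n + 1)) :=
      Measurable.of_comap_le (le_biSup (fun k => (strongMS H).comap (Ψ k)) (Set.mem_Iic.2 le_rfl))
    exact measurable_one_sub_apply_strongMS.comp (hR.prodMk hΨ)

lemma measurable_residualProd_apply {Ψ : ℕ → Ω → (H →L[ℂ] H)}
    (hmeas : ∀ k, ∀ x : H, Measurable fun ω => Ψ k ω x) (x : H) (n : ℕ) :
    Measurable fun ω => residualProd Ψ ω n x :=
  (measurable_residualProd_apply_biSup Ψ x n).mono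
    (iSup₂_le fun k _ => (measurable_strongMS_iff.2 (hmeas k)).comap_le) le_rfl

lemma lintegral_enorm_residualProd_apply_sq_le [CompleteSpace H] [IsProbabilityMeasure μ]
    {Ψ : ℕ → Ω → (H →L[ℂ] H)} (hmeas : ∀ k, ∀ x : H, Measurable fun ω => Ψ k ω x)
    (hpos : ∀ k ω, 0 ≤ Ψ k ω) (hcontr : ∀ k ω, Ψ k ω ≤ 1)
    (hindep : iIndepFun (m := fun _ : ℕ => strongMS H) Ψ μ) {C : ℝ}
    (hcoer : ∀ k, ∀ x : H, C * ‖x‖ ^ 2 ≤ ∫ ω, ‖Ψ k ω x‖ ^ 2 ∂μ) (x : H) (n : ℕ) :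
    ∫⁻ ω, ‖residualProd Ψ ω n x‖ₑ ^ 2 ∂μ ≤ ENNReal.ofReal (1 - C) ^ n * ‖x‖ₑ ^ 2 := by
  have hΨ : ∀ k, Measurable[mΩ, strongMS H] (Ψ k) := fun k => measurable_strongMS_iff.2 (hmeas k)
  induction n with
  | zero => simp [residualProd]
  | succ n ih =>
    have hRΨ := hindep.indepFun_of_measurable_biSup hΨ (by simp : n + 1 ∉ Set.Iic n)
      (measurable_residualProd_apply_biSup Ψ x n)
    calc ∫⁻ ω, ‖residualProd Ψ ω (n + 1) x‖ₑ ^ 2 ∂μ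
        = ∫⁻ ω, ∫⁻ ω', ‖(1 - Ψ (n + 1) ω') (residualProd Ψ ω n x)‖ₑ ^ 2 ∂μ ∂μ :=
          hRΨ.lintegral_comp_eq_lintegral_lintegral (mβ := strongMS H)
            (f := fun y T => ‖(1 - T) y‖ₑ ^ 2) (measurable_residualProd_apply hmeas x n) (hΨ (n + 1))
            ((measurable_enorm.pow_const 2).comp measurable_one_sub_apply_strongMS)
      _ ≤ ∫⁻ ω, ENNReal.ofReal (1 - C) * ‖residualProd Ψ ω n x‖ₑ ^ 2 ∂μ :=
          lintegral_mono fun ω => lintegral_enorm_one_sub_apply_sq_le (hmeas (n + 1))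
            (hpos (n + 1)) (hcontr (n + 1)) (hcoer (n + 1)) _
      _ = ENNReal.ofReal (1 - C) * ∫⁻ ω, ‖residualProd Ψ ω n x‖ₑ ^ 2 ∂μ :=
          lintegral_const_mul' _ _ ENNReal.ofReal_ne_top
      _ ≤ ENNReal.ofReal (1 - C) ^ (n + 1) * ‖x‖ₑ ^ 2 := by
          rw [pow_succ', mul_assoc]
          gcongr

end ResidualProd

theorem almost_sure_expansion_general
    {Ω : Type*} [MeasureSpace Ω] [IsProbabilityMeasure (ℙ : Measure Ω)]
    {H : Type*} [NormedAddCommGroup H] [InnerProductSpace ℂ H]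
    [CompleteSpace H] [TopologicalSpace.SeparableSpace H]
    [MeasurableSpace H] [BorelSpace H]
    (Ψ : ℕ → Ω → (H →L[ℂ] H))
    (hmeas : ∀ k, ∀ x : H, Measurable fun ω => Ψ k ω x)
    (hpos : ∀ k ω, 0 ≤ Ψ k ω) (hcontr : ∀ k ω, Ψ k ω ≤ 1)
    (hindep : iIndepFun (m := fun _ : ℕ => strongMS H) Ψ (ℙ : Measure Ω))
    (C : ℝ) (hC0 : 0 < C)
    (hcoer : ∀ k, ∀ x : H, C * ‖x‖ ^ 2 ≤ ∫ ω : Ω, ‖Ψ k ω x‖ ^ 2 ∂(ℙ : Measure Ω))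
    (x : H) :
    ∀ᵐ ω ∂(ℙ : Measure Ω),
      Tendsto (fun n => ∑ k ∈ Finset.Icc 1 n, Ψ k ω (residualProd Ψ ω (k - 1) x))
        atTop (nhds x) := by
  have hsum : ∑' n, ∫⁻ ω, ‖residualProd Ψ ω n x‖ₑ ^ 2 ≠ ∞ := by
    refine ne_top_of_le_ne_top ?_ (ENNReal.tsum_le_tsum
      (lintegral_enorm_residualProd_apply_sq_le hmeas hpos hcontr hindep hcoer x))
    rw [ENNReal.tsum_mul_right]
    exact ENNReal.mul_ne_top (tsum_geometric_lt_top.2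
      (ENNReal.ofReal_lt_one.2 (by linarith))).ne (by simp)
  filter_upwards [ae_tendsto_zero_of_tsum_lintegral_ne_top
    (fun n => ((measurable_residualProd_apply hmeas x n).enorm.pow_const 2).aemeasurable) hsum]
    with ω hω
  have hR : Tendsto (fun n => residualProd Ψ ω n x) atTop (𝓝 0) := by
    rw [tendsto_zero_iff_enorm_tendsto_zero]
    have h := (ENNReal.continuous_rpow_const (y := ((2 : ℕ) : ℝ)⁻¹).tendsto 0).comp hω
    simp only [Function.comp_def, ENNReal.pow_rpow_inv_natCast two_ne_zero] at h
    rwa [ENNReal.zero_rpow_of_pos (by norm_num)] at h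
  simp_rw [← mul_apply_eq_comp, ← sum_apply, sum_Icc_mul_residualProd, sub_apply,
    one_apply_eq_self]
  simpa using tendsto_const_nhds.sub hR

/-- For an i.i.d. sequence `(Ψ_k)` of strongly measurable random positive
contractions satisfying the coercivity condition with `0 < C < 1`, for every `x ∈ H` one has,
almost surely, `x = lim_n Σ_{k=1}^n Ψ_k (I - Ψ_{k-1})⋯(I - Ψ₁) x`; i.e. the operator identity
`I = Σ_{k=1}^∞ Ψ_k (I - Ψ_{k-1})⋯(I - Ψ₁)` holds a.s. in the strong sense. -/
theorem almost_sure_expansion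
    {Ω : Type*} [MeasureSpace Ω] [IsProbabilityMeasure (ℙ : Measure Ω)]
    {H : Type*} [NormedAddCommGroup H] [InnerProductSpace ℂ H]
    [CompleteSpace H] [TopologicalSpace.SeparableSpace H]
    [MeasurableSpace H] [BorelSpace H]
    (Ψ : ℕ → Ω → (H →L[ℂ] H))
    (hmeas : ∀ k, ∀ x : H, Measurable fun ω => Ψ k ω x)
    (hpos : ∀ k ω, 0 ≤ Ψ k ω) (hcontr : ∀ k ω, Ψ k ω ≤ 1)
    (hindep : iIndepFun (m := fun _ : ℕ => strongMS H) Ψ (ℙ : Measure Ω))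
    (hident : ∀ i j : ℕ,
      @IdentDistrib Ω Ω (H →L[ℂ] H) _ _ (strongMS H) (Ψ i) (Ψ j) ℙ ℙ)
    (C : ℝ) (hC0 : 0 < C) (hC1 : C < 1)
    (hcoer : ∀ k, ∀ x : H, C * ‖x‖ ^ 2 ≤ ∫ ω : Ω, ‖Ψ k ω x‖ ^ 2 ∂(ℙ : Measure Ω))
    (x : H) :
    ∀ᵐ ω ∂(ℙ : Measure Ω),
      Tendsto (fun n => ∑ k ∈ Finset.Icc 1 n, Ψ k ω (residualProd Ψ ω (k - 1) x))
        atTop (nhds x) :=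
  almost_sure_expansion_general Ψ hmeas hpos hcontr hindep C hC0 hcoer x
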